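/- arXiv:1111.2526 — 7 statements merged into one kernel-verified Lean document; each statement's English description precedes it below -/
import Mathlib

section
/- Let T ⊆ 2^{<ℕ} be an infinite binary tree. For each y, let σ_y be the lexicographically least element of T of length y. Define f : [ℕ]² → Bool by f(x,y) = σ_y(x) for x < y. Then f is a stable coloring: for each x there exists t > x such that f(x,y) = f(x,t) for all y > t. -/
/-!
Fix `x` and look only at the first `x + 1` bits of the least strings `σ_y`, `y > x`. If `y ≤ y'`,
the restriction of `σ_{y'}` to length `y` lies in `T`, so it is lexicographically above `σ_y`;
truncating preserves this, hence the length-`(x+1)` prefixes of the `σ_y` form a lexicographically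
nondecreasing sequence. It ranges over the finitely many strings of length `x + 1`, so it is
eventually constant, and `f(x, y)` is read off that prefix.
-/

/-- The initial segment of length `n` of an infinite binary sequence `p`. -/
def initSeg (p : ℕ → Bool) (n : ℕ) : List Bool := (List.range n).map p

/-- A tree of finite binary strings: a set closed under initial segments. -/
def IsTree (T : Set (List Bool)) : Prop := ∀ σ ∈ T, ∀ τ : List Bool, τ <+: σ → τ ∈ T

/-- `H` is homogeneous for the string `σ` with color `c`. -/
def HomogFor (H : Set ℕ) (c : Bool) (σ : List Bool) : Prop :=
  ∀ x ∈ H, x < σ.length → σ.getD x false = c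

/-- `H` is homogeneous (with color `c`) for arbitrarily long strings of `T`. -/
def HomogPathC (H : Set ℕ) (c : Bool) (T : Set (List Bool)) : Prop :=
  ∀ t : ℕ, ∃ σ ∈ T, t ≤ σ.length ∧ HomogFor H c σ

namespace List

theorem getD_take_of_lt {α : Type*} {l : List α} {i k : ℕ} (hik : i < k) (d : α) :
    (l.take k).getD i d = l.getD i d := by
  simp only [getD_eq_getElem?_getD, getElem?_take_of_lt hik]

variable {α : Type*} [LinearOrder α]

theorem take_le_take_of_lt {l₁ l₂ : List α} (h : l₁ < l₂) (k : ℕ) : l₁.take k ≤ l₂.take k := by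
  induction h generalizing k with
  | nil =>
    cases k with
    | zero => simp
    | succ k => exact (show _ < _ from Lex.nil).le
  | rel hab =>
    cases k with
    | zero => simp
    | succ k => exact (show _ < _ from Lex.rel hab).le
  | cons _ ih =>
    cases k with
    | zero => simp
    | succ k =>
      rcases (ih k).eq_or_lt with heq | hlt
      · simp [heq]
      · exact (show _ < _ from Lex.cons hlt).le

theorem take_le_take_of_le {l₁ l₂ : List α} (h : l₁ ≤ l₂) (k : ℕ) : l₁.take k ≤ l₂.take k := by
  rcases h.eq_or_lt with rfl | hlt
  · exact le_rfl
  · exact take_le_take_of_lt hlt k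

end List

theorem Monotone.exists_forall_ge_eq_of_finite_range {α : Type*} [PartialOrder α] {g : ℕ → α}
    (hg : Monotone g) (hfin : (Set.range g).Finite) : ∃ N, ∀ n ≥ N, g n = g N := by
  have := hfin.to_subtype
  obtain ⟨N, hN⟩ := WellFoundedGT.monotone_chain_condition
    ⟨Set.rangeFactorization g, fun _ _ hmn ↦ hg hmn⟩
  exact ⟨N, fun n hn ↦ congrArg Subtype.val (hN n hn).symm⟩

theorem IsTree.take_mem {T : Set (List Bool)} (hT : IsTree T) {σ : List Bool} (hσ : σ ∈ T)
    (n : ℕ) : σ.take n ∈ T :=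
  hT σ hσ _ (List.take_prefix n σ)

theorem take_least_le_take_least {T : Set (List Bool)} (hT : IsTree T) {σs : ℕ → List Bool}
    (hmem : ∀ y, σs y ∈ T) (hlen : ∀ y, (σs y).length = y)
    (hleast : ∀ y, ∀ τ ∈ T, τ.length = y → σs y = τ ∨ List.Lex (· < ·) (σs y) τ)
    {k y y' : ℕ} (hky : k ≤ y) (hyy' : y ≤ y') : (σs y).take k ≤ (σs y').take k := by
  have hle : σs y ≤ (σs y').take y :=
    le_iff_eq_or_lt.2 <| hleast y _ (hT.take_mem (hmem y') y) (by simp [hlen, hyy'])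
  simpa [List.take_take, hky] using List.take_le_take_of_le hle k

theorem stmt1_general (T : Set (List Bool)) (hT : IsTree T)
    (σs : ℕ → List Bool)
    (hmem : ∀ y, σs y ∈ T) (hlen : ∀ y, (σs y).length = y)
    (hleast : ∀ y, ∀ τ ∈ T, τ.length = y → σs y = τ ∨ List.Lex (· < ·) (σs y) τ)
    (f : ℕ → ℕ → Bool) (hf : ∀ x y, x < y → f x y = (σs y).getD x false) :
    ∀ x, ∃ t, x < t ∧ ∀ y, t < y → f x y = f x t := by
  intro x
  set k := x + 1
  set g : ℕ → List Bool := fun n ↦ (σs (k + n)).take k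
  have hg : Monotone g := fun m n hmn ↦
    take_least_le_take_least hT hmem hlen hleast (Nat.le_add_right k m) (Nat.add_le_add_left hmn k)
  have hfin : (Set.range g).Finite := by
    refine (List.finite_length_eq Bool k).subset ?_
    rintro _ ⟨n, rfl⟩
    simp [g, hlen]
  obtain ⟨N, hN⟩ := hg.exists_forall_ge_eq_of_finite_range hfin
  have hfg : ∀ n, f x (k + n) = (g n).getD x false := fun n ↦ by
    rw [hf x _ (by omega), List.getD_take_of_lt (Nat.lt_succ_self x)]
  refine ⟨k + N, by omega, fun y hy ↦ ?_⟩
  obtain ⟨n, rfl⟩ : ∃ n, y = k + n := ⟨y - k, by omega⟩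
  rw [hfg, hfg, hN n (by omega)]

/-- For an infinite binary tree `T`, with `σs y` the lexicographically least element of
`T` of length `y`, the coloring `f x y = σs y x` (for `x < y`) is stable. -/
theorem stmt1 (T : Set (List Bool)) (hT : IsTree T)
    (hInf : ∀ n, ∃ σ ∈ T, σ.length = n)
    (σs : ℕ → List Bool)
    (hmem : ∀ y, σs y ∈ T) (hlen : ∀ y, (σs y).length = y)
    (hleast : ∀ y, ∀ τ ∈ T, τ.length = y → σs y = τ ∨ List.Lex (· < ·) (σs y) τ)
    (f : ℕ → ℕ → Bool) (hf : ∀ x y, x < y → f x y = (σs y).getD x false) :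
    ∀ x, ∃ t, x < t ∧ ∀ y, t < y → f x y = f x t :=
  stmt1_general T hT σs hmem hlen hleast f hf
end

section
/- Let T ⊆ 2^{<ℕ} be an infinite binary tree, let σ_y denote the lexicographically least element of T of length y, and define f(x,y) = σ_y(x) for x < y. If H ⊆ ℕ is an infinite set homogeneous for f with color c (i.e., f(x,y) = c for all x < y both in H), then H is homogeneous for a path through T: for every t there is σ ∈ T with |σ| ≥ t such that σ(x) = c for all x ∈ H with x < |σ|. -/
/-- If `H` is an infinite set homogeneous with color `c` for the coloring
`f x y = σs y x` built from the lexicographically least elements of an infinite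
binary tree `T`, then `H` is homogeneous for a path through `T` with color `c`. -/
theorem stmt2 (T : Set (List Bool)) (hT : IsTree T)
    (hInf : ∀ n, ∃ σ ∈ T, σ.length = n)
    (σs : ℕ → List Bool)
    (hmem : ∀ y, σs y ∈ T) (hlen : ∀ y, (σs y).length = y)
    (hleast : ∀ y, ∀ τ ∈ T, τ.length = y → σs y = τ ∨ List.Lex (· < ·) (σs y) τ)
    (f : ℕ → ℕ → Bool) (hf : ∀ x y, x < y → f x y = (σs y).getD x false)
    (H : Set ℕ) (hH : H.Infinite) (c : Bool)
    (hhom : ∀ x ∈ H, ∀ y ∈ H, x < y → f x y = c) :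
    HomogPathC H c T := by
  intro t
  obtain ⟨y, hyH, hty⟩ := hH.exists_gt t
  refine ⟨σs y, hmem y, by rw [hlen y]; exact hty.le, ?_⟩
  intro x hxH hxlt
  rw [hlen y] at hxlt
  rw [← hf x y hxlt]
  exact hhom x hxH y hyH hxlt
end

section
/- Let Σ be a set of finite binary strings containing strings of arbitrarily long length. For each y, let σ_y be (a choice of) the lexicographically least string in Σ whose length is the minimal length ≥ y among lengths of strings in Σ. Define f : [ℕ]² → Bool by f(x,y) = σ_y(x) for x < y. If H is an infinite set homogeneous for f with color c, then H is homogeneous for a path through T_Σ: for every t there is τ ∈ T_Σ with |τ| ≥ t and τ(x) = c for all x ∈ H with x < |τ|. -/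
/-- The downward closure of a set of strings under initial segments. -/
def DC (S : Set (List Bool)) : Set (List Bool) := {τ | ∃ σ ∈ S, τ <+: σ}

/-- Combinatorial core of "RT²₂ implies RKL⁺": `σs y` is the lexicographically
least string of `S` of the minimal length `≥ y` occurring in `S`; if `H` is an
infinite set homogeneous with color `c` for `f x y = σs y x`, then `H` is
homogeneous for a path through the downward closure of `S`. -/
theorem stmt5 (S : Set (List Bool)) (hS : ∀ y, ∃ σ ∈ S, y ≤ σ.length)
    (σs : ℕ → List Bool)
    (hmem : ∀ y, σs y ∈ S) (hlen : ∀ y, y ≤ (σs y).length)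
    (hminlen : ∀ y, ∀ τ ∈ S, y ≤ τ.length → (σs y).length ≤ τ.length)
    (hleast : ∀ y, ∀ τ ∈ S, τ.length = (σs y).length → σs y = τ ∨ List.Lex (· < ·) (σs y) τ)
    (f : ℕ → ℕ → Bool) (hf : ∀ x y, x < y → f x y = (σs y).getD x false)
    (H : Set ℕ) (hH : H.Infinite) (c : Bool)
    (hhom : ∀ x ∈ H, ∀ y ∈ H, x < y → f x y = c) :
    HomogPathC H c (DC S) := by
  intro t
  obtain ⟨y, hyH, hty⟩ := hH.exists_gt t
  refine ⟨(σs y).take y, ⟨σs y, hmem y, List.take_prefix _ _⟩, ?_, ?_⟩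
  · rw [List.length_take]
    have := hlen y
    omega
  · intro x hx hxlt
    rw [List.length_take] at hxlt
    have hxy : x < y := lt_of_lt_of_le hxlt (min_le_left _ _)
    have h1 : f x y = c := hhom x hx y hyH hxy
    have h2 : f x y = (σs y).getD x false := hf x y hxy
    rw [← h1, h2]
    simp [List.getD_eq_getElem?_getD, List.getElem?_take, hxy]
end

section
/- Let A₀, A₁ ⊆ ℕ with A₀ ∪ A₁ = ℕ, and suppose f : [ℕ]² → Bool is a function such that for every x and i ∈ {0,1}: if f(x,y) = i for infinitely many y, then x ∈ A_i. Construct Σ = { σ_y : |σ_y| = y and σ_y(x) = f(x,y) for x < y }. If H is an infinite set homogeneous for a path through T_Σ with color c, then H ⊆ A_c. -/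
theorem List.IsPrefix.getD_eq {α : Type*} {τ σ : List α} (hτσ : τ <+: σ) (d : α) {n : ℕ}
    (hn : n < τ.length) : σ.getD n d = τ.getD n d := by
  obtain ⟨rest, rfl⟩ := hτσ
  exact List.getD_append _ _ _ _ hn

/-- For every `t`, a homogeneous string of length `> max x t` in the tree lies below some `σs y`;
then `y > t` and `f x y = (σs y)(x) = c`. -/
theorem infinite_setOf_color_eq_of_homogPathC (f : ℕ → ℕ → Bool) (σs : ℕ → List Bool)
    (hlen : ∀ y, (σs y).length = y) (hσ : ∀ y, ∀ x < y, (σs y).getD x false = f x y)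
    {H : Set ℕ} {c : Bool} (hhom : HomogPathC H c (DC (Set.range σs))) {x : ℕ} (hx : x ∈ H) :
    {y | f x y = c}.Infinite := by
  refine Set.infinite_of_forall_exists_gt fun t => ?_
  obtain ⟨τ, ⟨_, ⟨y, rfl⟩, hτy⟩, hτlen, hτhom⟩ := hhom (max x t + 1)
  have hyτ : τ.length ≤ y := hlen y ▸ hτy.length_le
  have hxτ : x < τ.length := by omega
  refine ⟨y, ?_, by omega⟩
  show f x y = c
  rw [← hσ y x (by omega), hτy.getD_eq false hxτ]
  exact hτhom x hx hxτ

theorem stmt8_general (A : Bool → Set ℕ)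
    (f : ℕ → ℕ → Bool)
    (hlim : ∀ x (i : Bool), {y | f x y = i}.Infinite → x ∈ A i)
    (σs : ℕ → List Bool) (hlen : ∀ y, (σs y).length = y)
    (hσ : ∀ y, ∀ x < y, (σs y).getD x false = f x y)
    (H : Set ℕ) (c : Bool)
    (hhom : HomogPathC H c (DC (Set.range σs))) :
    H ⊆ A c := fun x hx =>
  hlim x c (infinite_setOf_color_eq_of_homogPathC f σs hlen hσ hhom hx)

/-- Core of Yokoyama's proof: `A false ∪ A true = ℕ`, and `f` detects membership
in the limit (if `f x y = i` for infinitely many `y` then `x ∈ A i`).  If `H` is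
infinite and homogeneous for a path through `T_Σ` with color `c`, where
`Σ = {σ_y : |σ_y| = y, σ_y x = f x y}`, then `H ⊆ A c`. -/
theorem stmt8 (A : Bool → Set ℕ) (hcov : A false ∪ A true = Set.univ)
    (f : ℕ → ℕ → Bool)
    (hlim : ∀ x (i : Bool), {y | f x y = i}.Infinite → x ∈ A i)
    (σs : ℕ → List Bool) (hlen : ∀ y, (σs y).length = y)
    (hσ : ∀ y, ∀ x < y, (σs y).getD x false = f x y)
    (H : Set ℕ) (hH : H.Infinite) (c : Bool)
    (hhom : HomogPathC H c (DC (Set.range σs))) :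
    H ⊆ A c :=
  stmt8_general A f hlim σs hlen hσ H c hhom
end

section
/- If T ⊆ 2^{<ℕ} is a tree such that τ ∈ T iff (∀ y, ∃ z, φ(τ, y, z)) for a decidable φ, then there is a tree S defined by a Σ⁰₁ condition — τ ∈ S iff ∃ ẑ, ∀ x y ≤ |τ|, ∃ z < ẑ, φ(τ↾x, y, z) — such that the sets of infinite paths coincide: [S] = [T]. -/
lemma initSeg_take (p : ℕ → Bool) {x n : ℕ} (h : x ≤ n) :
    (initSeg p n).take x = initSeg p x := by
  simp [initSeg, ← List.map_take, List.take_range, Nat.min_eq_left h]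

lemma initSeg_length (p : ℕ → Bool) (n : ℕ) : (initSeg p n).length = n := by
  simp [initSeg]

/-- Reduction of Π⁰₂ trees to Σ⁰₁ trees: if `T = {τ | ∀ y, ∃ z, φ τ y z}` is a tree,
then the tree `S = {τ | ∃ ẑ, ∀ x y ≤ |τ|, ∃ z < ẑ, φ (τ↾x) y z}` has the same
infinite paths as `T`. -/
theorem stmt11 (φ : List Bool → ℕ → ℕ → Prop)
    (T : Set (List Bool)) (hT : ∀ τ, τ ∈ T ↔ ∀ y, ∃ z, φ τ y z)
    (htree : IsTree T) :
    ∃ S : Set (List Bool),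
      (∀ τ, τ ∈ S ↔ ∃ zhat, ∀ x ≤ τ.length, ∀ y ≤ τ.length, ∃ z < zhat, φ (τ.take x) y z) ∧
      IsTree S ∧
      ∀ p : ℕ → Bool, (∀ n, initSeg p n ∈ S) ↔ (∀ n, initSeg p n ∈ T) := by
  refine ⟨{τ | ∃ zhat, ∀ x ≤ τ.length, ∀ y ≤ τ.length, ∃ z < zhat, φ (τ.take x) y z},
    fun τ => Iff.rfl, ?_, ?_⟩
  · rintro σ ⟨zhat, hσ⟩ τ hpre
    refine ⟨zhat, fun x hx y hy => ?_⟩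
    have hlen : τ.length ≤ σ.length := hpre.length_le
    have htake : τ.take x = σ.take x := by
      obtain ⟨t, rfl⟩ := hpre
      rw [List.take_append_of_le_length hx]
    rw [htake]
    exact hσ x (hx.trans hlen) y (hy.trans hlen)
  · intro p
    constructor
    · intro hp n
      rw [hT]
      intro y
      obtain ⟨zhat, h⟩ := hp (max n y)
      rw [initSeg_length] at h
      obtain ⟨z, _, hz⟩ := h n (le_max_left _ _) y (le_max_right _ _)
      rw [initSeg_take p (le_max_left n y)] at hz
      exact ⟨z, hz⟩
    · intro hp n
      have hf : ∀ x y, ∃ z, φ (initSeg p x) y z := fun x y => ((hT _).mp (hp x)) y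
      choose f hf using hf
      refine ⟨(Finset.range (n+1)).sup (fun x => (Finset.range (n+1)).sup (fun y => f x y)) + 1,
        fun x hx y hy => ?_⟩
      rw [initSeg_length] at hx hy
      refine ⟨f x y, ?_, by rw [initSeg_take p hx]; exact hf x y⟩
      have h1 : f x y ≤ (Finset.range (n+1)).sup (fun y => f x y) :=
        Finset.le_sup (Finset.mem_range.mpr (Nat.lt_succ_of_le hy))
      have h2 : (Finset.range (n+1)).sup (fun y => f x y) ≤
          (Finset.range (n+1)).sup (fun x => (Finset.range (n+1)).sup (fun y => f x y)) :=
        Finset.le_sup (f := fun x => (Finset.range (n+1)).sup (fun y => f x y)) (Finset.mem_range.mpr (Nat.lt_succ_of_le hx))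
      omega
end

section
/- Let T be a tree of binary strings enumerated as T = ⋃_s T_s where T₀ = ∅, T_{s+1} adds exactly one string τ_s to T_s with |τ_s| ≤ s, and every string in T of length ≤ s that will ever appear has arbitrarily large extensions in T whenever it is extendible in T. Define Σ by: at each stage s > 0 with τ_s the new string, put into Σ some σ ⊇ τ_s with |σ| = s. Then T ⊆ T_Σ and every extendible node of T_Σ is an extendible node of T; consequently [T] = [T_Σ]. -/
/-- A node of `T` is extendible if it is extended by arbitrarily long strings in `T`. -/
def Extendible (T : Set (List Bool)) (τ : List Bool) : Prop :=
  ∀ m, ∃ σ ∈ T, τ <+: σ ∧ m ≤ σ.length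

lemma initSeg_prefix (p : ℕ → Bool) {n m : ℕ} (h : n ≤ m) :
    initSeg p n <+: initSeg p m := by
  have ht : (initSeg p m).take n = initSeg p n := by
    simp [initSeg, ← List.map_take, List.take_range, Nat.min_eq_left h]
  exact ht ▸ List.take_prefix n (initSeg p m)

/-- Construction of Proposition 3.2: if the tree `T` is enumerated (one string `τs s`
per stage, with `|τs s| ≤ s`) and at each stage `s` we put into `Σ` a string `σs s` of
length `s` extending `τs s`, then `T ⊆ T_Σ`, every extendible node of `T_Σ` is an
extendible node of `T`, and `[T] = [T_Σ]`. -/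
theorem stmt12 (T : Set (List Bool)) (htree : IsTree T)
    (hinf : ∀ n, ∃ σ ∈ T, n ≤ σ.length)
    (τs : ℕ → List Bool) (hinj : Function.Injective τs)
    (henum : T = Set.range τs) (hτlen : ∀ s, (τs s).length ≤ s)
    (σs : ℕ → List Bool) (hext : ∀ s, τs s <+: σs s) (hσlen : ∀ s, (σs s).length = s) :
    T ⊆ DC (Set.range σs) ∧
    (∀ ρ, Extendible (DC (Set.range σs)) ρ → Extendible T ρ) ∧
    ∀ p : ℕ → Bool, ((∀ n, initSeg p n ∈ T) ↔ (∀ n, initSeg p n ∈ DC (Set.range σs))) := by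
  have hsub : T ⊆ DC (Set.range σs) := by
    intro τ hτ
    rw [henum] at hτ
    obtain ⟨s, rfl⟩ := hτ
    exact ⟨σs s, ⟨s, rfl⟩, hext s⟩
  have hkey : ∀ ρ, Extendible (DC (Set.range σs)) ρ → Extendible T ρ := by
    intro ρ hρ m
    -- the set of stages s with ρ <+: σs s is infinite
    have hA : {s : ℕ | ρ <+: σs s}.Infinite := by
      rw [Set.infinite_coe_iff.symm, Set.infinite_coe_iff]
      apply Set.infinite_of_not_bddAbove
      rintro ⟨N, hN⟩
      obtain ⟨σ, ⟨σ', ⟨s, rfl⟩, hpre⟩, hρσ, hlen⟩ := hρ (N + 1)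
      have hs : s ∈ {s : ℕ | ρ <+: σs s} := hρσ.trans hpre
      have : N + 1 ≤ s := le_trans hlen (by rw [← hσlen s]; exact hpre.length_le)
      exact absurd (hN hs) (by omega)
    -- bad stages: where τs s is short
    have hB : {s : ℕ | (τs s).length ≤ m + ρ.length}.Finite :=
      Set.Finite.preimage hinj.injOn (List.finite_length_le Bool (m + ρ.length))
    obtain ⟨s, hsA, hsB⟩ := (hA.diff hB).nonempty
    simp only [Set.mem_setOf_eq, Set.mem_diff] at hsA hsB
    have hlen : m + ρ.length < (τs s).length := by
      simpa using lt_of_not_ge hsB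
    have hρτ : ρ <+: τs s :=
      List.prefix_of_prefix_length_le hsA (hext s) (by omega)
    refine ⟨τs s, ?_, hρτ, by omega⟩
    rw [henum]; exact ⟨s, rfl⟩
  refine ⟨hsub, hkey, fun p => ⟨fun h n => hsub (h n), fun h n => ?_⟩⟩
  have hx : Extendible (DC (Set.range σs)) (initSeg p n) := by
    intro m
    exact ⟨initSeg p (max m n), h _, initSeg_prefix p (le_max_right m n),
      by rw [initSeg_length]; exact le_max_left m n⟩
  obtain ⟨σ, hσT, hpre, _⟩ := hkey _ hx 0
  exact htree σ hσT _ hpre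
end

section
/- If g : ℕ → ℕ is a total computable function such that W_{g(e)} ≠ W_e for all e (g is fixed-point free), then there exists a total computable (relative to g) function d : ℕ → ℕ that is diagonally non-computable: d(e) ≠ Φ_e(e) whenever Φ_e(e)↓. -/
/-- The `e`-th partial computable function `Φ_e`. -/
def Phi (e : ℕ) : ℕ →. ℕ := (Denumerable.ofNat Nat.Partrec.Code e).eval

/-- `W_e`, the domain of the `e`-th partial computable function. -/
def WSet (e : ℕ) : Set ℕ := {x | (Phi e x).Dom}

/-!
By the s-m-n theorem there is a computable `h` with `Φ_{h e} = Φ_{Φ_e(e)}` whenever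
`Φ_e(e)↓`. Then `g ∘ h` is diagonally non-computable: if `g (h e) = Φ_e(e)`, then
`Φ_{g (h e)} = Φ_{h e}`, so `h e` would be a fixed point of `g`.
-/

open Nat.Partrec (Code)
open Nat.Partrec.Code

theorem partrec₂_Phi : Partrec₂ Phi :=
  eval_part.comp ((Computable.ofNat Code).comp Computable.fst) Computable.snd

theorem exists_computable_Phi_eq {f : ℕ → ℕ →. ℕ} (hf : Partrec₂ f) :
    ∃ h : ℕ → ℕ, Computable h ∧ ∀ e, Phi (h e) = f e := by
  obtain ⟨c, hc⟩ := exists_code.1 (Partrec.nat_iff.1 (Partrec.comp hf Primrec.unpair.to_comp))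
  refine ⟨fun e => Encodable.encode (c.curry e),
    (Primrec.encode.comp (primrec₂_curry.comp (Primrec.const c) Primrec.id)).to_comp,
    fun e => funext fun x => ?_⟩
  simp [Phi, eval_curry, hc]

theorem partrec₂_Phi_diag_bind : Partrec₂ fun e x => (Phi e e).bind fun v => Phi v x :=
  (partrec₂_Phi.comp Computable.fst Computable.fst).bind
    (partrec₂_Phi.comp Computable.snd (Computable.snd.comp Computable.fst)).to₂

/-- A total computable fixed-point-free function computes a diagonally
non-computable function (Arslanov / Soare V.5.8 direction). -/
theorem stmt19 (g : ℕ → ℕ) (hg : Computable g)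
    (hfpf : ∀ e, WSet (g e) ≠ WSet e) :
    ∃ d : ℕ → ℕ, Computable d ∧
      ∀ e (h : (Phi e e).Dom), d e ≠ (Phi e e).get h := by
  obtain ⟨h, hh, hPhi⟩ := exists_computable_Phi_eq partrec₂_Phi_diag_bind
  refine ⟨g ∘ h, hg.comp hh, fun e he hfix => hfpf (h e) ?_⟩
  have hdiag : Phi e e = Part.some (g (h e)) :=
    Part.eq_some_iff.2 ((show g (h e) = _ from hfix) ▸ Part.get_mem he)
  have hindex : Phi (h e) = Phi (g (h e)) := by
    funext x
    simp [hPhi, hdiag]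
  simp only [WSet, hindex]
end
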